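/- Let K be a finite index set, C > 0, d : K → ℂ with Re d_k ≥ 0, Im d_k ≥ 0 and |d_k| ≤ C for every k ∈ K, and v : K → ℝ with v_k > 0 for every k. For each k define the modified demand d̃_k = min((Re d_k + Im d_k)/√2, C/√2). Then for every S ⊆ K with |Σ_{k∈S} d_k| ≤ C, there exists S' ⊆ K with Σ_{k∈S'} d̃_k ≤ C/√2 and 2 · Σ_{k∈S'} v_k ≥ Σ_{k∈S} v_k. -/

import Mathlib

/-!
Since `Re z + Im z ≤ √2 ‖z‖`, the modified demands of a feasible `S` add up to at most
`C = √2 · (C/√2) < 3/2 · (C/√2)`, each being at most `C/√2`. Items of size at most `M` and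
total at most `3/2 · M` can be packed into two bins of size `M`; the more valuable bin carries
at least half the value of `S`.
-/

open Finset

/-- Take `T` of maximal cardinality among the subsets that fit. If `S \ T` overflowed, it would
contain two elements, each overflowing `T` when added to it; summing the three overflows gives
a total above `3/2 · M`. -/
lemma Finset.exists_subset_sum_le_and_sum_sdiff_le {ι : Type*} [DecidableEq ι] {S : Finset ι}
    {x : ι → ℝ} {M : ℝ} (hx₀ : ∀ k ∈ S, 0 ≤ x k) (hxM : ∀ k ∈ S, x k ≤ M)
    (hS : ∑ k ∈ S, x k ≤ 3 / 2 * M) :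
    ∃ T ⊆ S, ∑ k ∈ T, x k ≤ M ∧ ∑ k ∈ S \ T, x k ≤ M := by
  have hM : 0 ≤ M := by linarith [sum_nonneg hx₀]
  set P := S.powerset.filter fun T => ∑ k ∈ T, x k ≤ M
  obtain ⟨T, hTP, hTmax⟩ := P.exists_max_image card ⟨∅, by simp [P, hM]⟩
  obtain ⟨hTS, hT⟩ : T ⊆ S ∧ ∑ k ∈ T, x k ≤ M := by simpa [P] using hTP
  refine ⟨T, hTS, hT, ?_⟩
  by_contra! hrest
  have hoverflow : ∀ k ∈ S \ T, M < ∑ j ∈ T, x j + x k := by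
    intro k hk
    obtain ⟨hkS, hkT⟩ := mem_sdiff.mp hk
    by_contra! hfits
    have hmem : insert k T ∈ P := by
      simp only [P, mem_filter, mem_powerset, sum_insert hkT]
      exact ⟨insert_subset hkS hTS, by linarith⟩
    have := hTmax _ hmem
    rw [card_insert_of_notMem hkT] at this
    omega
  have htwo : 1 < #(S \ T) := by
    by_contra! hle
    have hbound := sum_le_card_nsmul (S \ T) x M fun k hk => hxM k (mem_sdiff.mp hk).1
    rw [nsmul_eq_mul] at hbound
    nlinarith [show (#(S \ T) : ℝ) ≤ 1 by exact_mod_cast hle]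
  obtain ⟨k₁, hk₁, k₂, hk₂, hne⟩ := one_lt_card.mp htwo
  have hpair := add_le_sum (fun k hk => hx₀ k (mem_sdiff.mp hk).1) hk₁ hk₂ hne
  linarith [sum_sdiff hTS (f := x), hoverflow k₁ hk₁, hoverflow k₂ hk₂]

lemma Complex.re_add_im_le_sqrt_two_mul_norm (z : ℂ) : z.re + z.im ≤ √2 * ‖z‖ := by
  rw [Complex.norm_def, ← Real.sqrt_mul zero_le_two, Complex.normSq_apply]
  exact Real.le_sqrt_of_sq_le (by nlinarith [sq_nonneg (z.re - z.im)])

theorem algb_half_approx_general {K : Type*} [Fintype K] (C : ℝ)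
    (d : K → ℂ) (hre : ∀ k, 0 ≤ (d k).re) (him : ∀ k, 0 ≤ (d k).im)
    (v : K → ℝ)
    (dt : K → ℝ)
    (hdt : ∀ k, dt k = min (((d k).re + (d k).im) / Real.sqrt 2) (C / Real.sqrt 2))
    (S : Finset K) (hS : ‖∑ k ∈ S, d k‖ ≤ C) :
    ∃ S' : Finset K, ∑ k ∈ S', dt k ≤ C / Real.sqrt 2 ∧
      ∑ k ∈ S, v k ≤ 2 * ∑ k ∈ S', v k := by
  classical
  have hsqrt : 0 < √2 := by positivity
  have hC : 0 ≤ C := (norm_nonneg _).trans hS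
  have hdt₀ : ∀ k ∈ S, 0 ≤ dt k := fun k _ => by
    rw [hdt]; exact le_min (by have := hre k; have := him k; positivity) (by positivity)
  have hdtM : ∀ k ∈ S, dt k ≤ C / √2 := fun k _ => hdt k ▸ min_le_right _ _
  have htotal : ∑ k ∈ S, dt k ≤ 3 / 2 * (C / √2) :=
    calc ∑ k ∈ S, dt k ≤ ∑ k ∈ S, ((d k).re + (d k).im) / √2 :=
          sum_le_sum fun k _ => hdt k ▸ min_le_left _ _
      _ = ((∑ k ∈ S, d k).re + (∑ k ∈ S, d k).im) / √2 := by
          rw [Complex.re_sum, Complex.im_sum, ← sum_add_distrib, sum_div]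
      _ ≤ C := by
          rw [div_le_iff₀ hsqrt, mul_comm]
          exact (Complex.re_add_im_le_sqrt_two_mul_norm _).trans (by gcongr)
      _ ≤ 3 / 2 * (C / √2) := by
          rw [mul_div_assoc', le_div_iff₀ hsqrt]
          nlinarith [Real.sqrt_two_lt_three_halves]
  obtain ⟨T, hTS, hT, hST⟩ := exists_subset_sum_le_and_sum_sdiff_le hdt₀ hdtM htotal
  have hsplit := sum_sdiff hTS (f := v)
  rcases le_total (∑ k ∈ S \ T, v k) (∑ k ∈ T, v k) with h | h
  · exact ⟨T, hT, by linarith⟩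
  · exact ⟨S \ T, hST, by linarith⟩

/-- Combinatorial core of Theorem 3: for every feasible C-KP solution `S`,
there is a solution `S'` feasible for the 1-KP instance with modified demands
`d̃_k = min((Re d_k + Im d_k)/√2, C/√2)` and capacity `C/√2` whose value is at
least half the value of `S`. -/
theorem algb_half_approx {K : Type*} [Fintype K] (C : ℝ) (hC : 0 < C)
    (d : K → ℂ) (hre : ∀ k, 0 ≤ (d k).re) (him : ∀ k, 0 ≤ (d k).im)
    (hmag : ∀ k, ‖d k‖ ≤ C)
    (v : K → ℝ) (hv : ∀ k, 0 < v k)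
    (dt : K → ℝ)
    (hdt : ∀ k, dt k = min (((d k).re + (d k).im) / Real.sqrt 2) (C / Real.sqrt 2))
    (S : Finset K) (hS : ‖∑ k ∈ S, d k‖ ≤ C) :
    ∃ S' : Finset K, ∑ k ∈ S', dt k ≤ C / Real.sqrt 2 ∧
      ∑ k ∈ S, v k ≤ 2 * ∑ k ∈ S', v k :=
  algb_half_approx_general C d hre him v dt hdt S hS
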